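/- Let (Z_i) be i.i.d. ℝ^d-valued with all required exponential moments near 0 (E e^{κ|Z₁|} < ∞ for some κ > 0), B_n ⊆ {x_i^n} with τ: B_n → Y a map such that κ_n := sup_{x∈B_n} |f(x) − f(τ(x))| → 0, where f is bounded on a neighborhood of Y. Then L̃_n = (1/n)∑_{x_i^n∈B_n} f(x_i^n)·Z_i and L̄_n = (1/n)∑_{x_i^n∈B_n} f(τ(x_i^n))·Z_i are exponentially equivalent: for every ε > 0, limsup_n (1/n) log P(|L̃_n − L̄_n| > ε) = −∞. -/

import Mathlib

open MeasureTheory Filter ProbabilityTheory Finset Real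
open scoped ENNReal

/-!
On `B n` the two sums differ by `∑ (a n i - b n i) *ᵥ Z i`, whose norm is at most
`(d + 1) κ n ∑_{i<n} ‖Z i‖`. The Chernoff bound for the i.i.d. sum `∑_{i<n} ‖Z i‖` at the
exponent `t > 0` of the exponential moment gives, once `κ n < δ`,
`(1/n) log P(‖L̃ n - L̄ n‖ > ε) ≤ Λ(t) - t ε / ((d + 1) δ)` with `Λ` the cumulant generating
function of `‖Z 0‖`; letting `δ → 0` sends the right side to `-∞`.
-/

lemma norm_mulVec_le_card_mul {m n : Type*} [Fintype m] [Fintype n] (A : m → n → ℝ)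
    (v : n → ℝ) : ‖Matrix.mulVec A v‖ ≤ Fintype.card n * ‖A‖ * ‖v‖ := by
  refine (pi_norm_le_iff_of_nonneg (by positivity)).2 fun j => ?_
  calc ‖∑ k, A j k * v k‖ ≤ ∑ k, ‖A j k‖ * ‖v k‖ := by
        simpa only [norm_mul] using norm_sum_le univ fun k => A j k * v k
    _ ≤ ∑ _k : n, ‖A‖ * ‖v‖ := by
        gcongr with k
        · exact (norm_le_pi_norm (A j) k).trans (norm_le_pi_norm A j)
        · exact norm_le_pi_norm v k
    _ = Fintype.card n * ‖A‖ * ‖v‖ := by simp [mul_assoc]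

lemma norm_sum_mulVec_sub_le {ι m n : Type*} [Fintype m] [Fintype n] {B s : Finset ι}
    (hB : B ⊆ s) {a b : ι → m → n → ℝ} {δ : ℝ} (hδ : 0 ≤ δ) (hab : ∀ i ∈ B, ‖a i - b i‖ ≤ δ)
    (z : ι → n → ℝ) :
    ‖∑ i ∈ B, (Matrix.mulVec (a i) (z i) - Matrix.mulVec (b i) (z i))‖ ≤
      Fintype.card n * δ * ∑ i ∈ s, ‖z i‖ := by
  calc ‖∑ i ∈ B, (Matrix.mulVec (a i) (z i) - Matrix.mulVec (b i) (z i))‖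
      ≤ ∑ i ∈ B, ‖Matrix.mulVec (a i - b i) (z i)‖ := by
        rw [sum_congr rfl fun i _ => (Matrix.sub_mulVec (a i) (b i) (z i)).symm]
        exact norm_sum_le _ _
    _ ≤ ∑ i ∈ B, Fintype.card n * δ * ‖z i‖ := by
        gcongr with i hi
        exact (norm_mulVec_le_card_mul _ _).trans (by gcongr; exact hab i hi)
    _ ≤ ∑ i ∈ s, Fintype.card n * δ * ‖z i‖ :=
        sum_le_sum_of_subset_of_nonneg hB fun i _ _ => by positivity
    _ = Fintype.card n * δ * ∑ i ∈ s, ‖z i‖ := (mul_sum _ _ _).symm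

theorem mul_div_le_of_lt_norm_inv_smul {E : Type*} [SeminormedAddCommGroup E] [NormedSpace ℝ E]
    {n : ℕ} {v : E} {ε K T : ℝ} (hε : 0 ≤ ε) (hK : 0 < K) (hv : ‖v‖ ≤ K * T)
    (h : ε < ‖(n : ℝ)⁻¹ • v‖) : n * (ε / K) ≤ T := by
  rcases n.eq_zero_or_pos with rfl | hn
  · simp at h; linarith
  have hn : (0 : ℝ) < n := by exact_mod_cast hn
  rw [norm_smul, norm_inv, Real.norm_natCast, lt_inv_mul_iff₀ hn] at h
  rw [← mul_div_assoc, div_le_iff₀ hK]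
  nlinarith

theorem ProbabilityTheory.iIndepFun.measure_mul_le_sum_range_le_exp_cgf {Ω : Type*}
    [MeasurableSpace Ω] {μ : Measure Ω} [IsProbabilityMeasure μ] {X : ℕ → Ω → ℝ}
    (hindep : iIndepFun X μ) (hmeas : ∀ i, Measurable (X i))
    (hident : ∀ i, IdentDistrib (X i) (X 0) μ μ) {t : ℝ} (ht : 0 ≤ t)
    (hint : Integrable (fun ω => exp (t * X 0 ω)) μ) (n : ℕ) (c : ℝ) :
    μ {ω | n * c ≤ ∑ i ∈ range n, X i ω} ≤
      ENNReal.ofReal (exp (n * (cgf (X 0) μ t - t * c))) := by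
  have hint_i : ∀ i, Integrable (fun ω => exp (t * X i ω)) μ := fun i =>
    ((hident i).comp (measurable_const_mul t).exp).integrable_iff.2 hint
  have hmgf : mgf (∑ i ∈ range n, X i) μ t = exp (cgf (X 0) μ t) ^ n := by
    rw [hindep.mgf_sum hmeas, exp_cgf hint, prod_eq_pow_card fun i _ =>
      mgf_congr_of_identDistrib _ _ (hident i) t, card_range]
  have hchernoff := measure_ge_le_exp_mul_mgf (X := ∑ i ∈ range n, X i) (n * c) ht
    (hindep.integrable_exp_mul_sum hmeas fun i _ => hint_i i)
  simp only [hmgf, Finset.sum_apply, ← exp_nat_mul, ← exp_add] at hchernoff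
  rw [← ENNReal.ofReal_toReal (measure_ne_top μ _), ← measureReal_def]
  refine ENNReal.ofReal_le_ofReal (hchernoff.trans_eq ?_)
  ring_nf

theorem limsup_inv_mul_log_le {p : ℕ → ℝ≥0∞} {c : ℝ}
    (h : ∀ᶠ n : ℕ in atTop, p n ≤ ENNReal.ofReal (exp (n * c))) :
    limsup (fun n : ℕ => ((n : ℝ)⁻¹ : EReal) * ENNReal.log (p n)) atTop ≤ c := by
  refine limsup_le_of_le (by isBoundedDefault) ?_
  filter_upwards [h, eventually_gt_atTop 0] with n hn hn_pos
  have hn0 : (0 : ℝ) < n := by exact_mod_cast hn_pos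
  calc ((n : ℝ)⁻¹ : EReal) * ENNReal.log (p n)
      ≤ ((n : ℝ)⁻¹ : EReal) * ((n * c : ℝ) : EReal) := by
        rw [← EReal.coe_inv]
        gcongr
        simpa [ENNReal.log_ofReal_of_pos (exp_pos _)] using ENNReal.log_monotone hn
    _ = c := by rw [← EReal.coe_inv, ← EReal.coe_mul, inv_mul_cancel_left₀ hn0.ne']

theorem EReal.eq_bot_of_forall_le_sub_div {x : EReal} {C K : ℝ} (hK : 0 < K)
    (h : ∀ δ > 0, x ≤ ((C - K / δ : ℝ) : EReal)) : x = ⊥ := by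
  refine (EReal.eq_bot_iff_forall_lt x).2 fun y => ?_
  set r := max (C - y + 1) 1
  have hr : 0 < r := lt_max_of_lt_right one_pos
  refine (h (K / r) (_root_.div_pos hK hr)).trans_lt ?_
  rw [div_div_cancel₀ hK.ne']
  exact_mod_cast (show C - r < y by linarith [le_max_left (C - y + 1) 1])

theorem exponential_equivalence_general {Ω : Type*} [MeasurableSpace Ω] (μ : Measure Ω)
    [IsProbabilityMeasure μ] {d m : ℕ} (Z : ℕ → Ω → (Fin d → ℝ))
    (hmeas : ∀ i, Measurable (Z i))
    (hindep : ProbabilityTheory.iIndepFun Z μ)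
    (hident : ∀ i, μ.map (Z i) = μ.map (Z 0))
    (hexp : ∃ κ > (0 : ℝ), Integrable (fun ω => Real.exp (κ * ‖Z 0 ω‖)) μ)
    (B : ℕ → Finset ℕ) (hB : ∀ n, B n ⊆ Finset.range n)
    (a b : ℕ → ℕ → (Fin m → Fin d → ℝ))
    (κn : ℕ → ℝ)
    (hκ : ∀ n, ∀ i ∈ B n, ‖a n i - b n i‖ ≤ κn n)
    (hκ0 : Tendsto κn atTop (nhds 0)) :
    ∀ ε > (0 : ℝ),
      Filter.limsup
        (fun n : ℕ => (((n : ℝ))⁻¹ : EReal) * ENNReal.log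
          (μ {ω | ε < ‖(n : ℝ)⁻¹ • ∑ i ∈ B n,
              (Matrix.mulVec (a n i) (Z i ω) - Matrix.mulVec (b n i) (Z i ω))‖}))
        atTop = ⊥ := by
  intro ε hε
  obtain ⟨t, ht, hint⟩ := hexp
  have hindep_norm : iIndepFun (fun i ω => ‖Z i ω‖) μ :=
    hindep.comp (fun _ v => ‖v‖) fun _ => measurable_norm
  have hident_norm : ∀ i, IdentDistrib (‖Z i ·‖) (‖Z 0 ·‖) μ μ := fun i =>
    (IdentDistrib.mk (hmeas i).aemeasurable (hmeas 0).aemeasurable (hident i)).comp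
      measurable_norm
  refine EReal.eq_bot_of_forall_le_sub_div (C := cgf (‖Z 0 ·‖) μ t)
    (K := t * ε / (d + 1)) (by positivity) fun δ hδ => limsup_inv_mul_log_le ?_
  filter_upwards [hκ0.eventually_lt_const hδ] with n hn
  calc _ ≤ μ {ω | n * (ε / ((d + 1) * δ)) ≤ ∑ i ∈ range n, ‖Z i ω‖} := by
        refine measure_mono fun ω hω => mul_div_le_of_lt_norm_inv_smul hε.le (by positivity) ?_ hω
        refine (norm_sum_mulVec_sub_le (hB n) hδ.le (fun i hi => (hκ n i hi).trans hn.le)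
          _).trans ?_
        gcongr
        simp
    _ ≤ _ := hindep_norm.measure_mul_le_sum_range_le_exp_cgf (fun i => (hmeas i).norm)
        hident_norm ht.le hint n _
    _ = _ := by congr 3; field_simp

/-- Exponential equivalence of `L̃ n = (1/n) ∑_{i ∈ B n} f(xᵢⁿ)·Z i` and
`L̄ n = (1/n) ∑_{i ∈ B n} f(τ(xᵢⁿ))·Z i` when the weight matrices `a n i = f(xᵢⁿ)` and
`b n i = f(τ(xᵢⁿ))` are uniformly close (`κ n → 0`) and bounded: for every `ε > 0`,
`limsup (1/n) log P(|L̃ n − L̄ n| > ε) = −∞`. -/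
theorem exponential_equivalence {Ω : Type*} [MeasurableSpace Ω] (μ : Measure Ω)
    [IsProbabilityMeasure μ] {d m : ℕ} (Z : ℕ → Ω → (Fin d → ℝ))
    (hmeas : ∀ i, Measurable (Z i))
    (hindep : ProbabilityTheory.iIndepFun Z μ)
    (hident : ∀ i, μ.map (Z i) = μ.map (Z 0))
    (hexp : ∃ κ > (0 : ℝ), Integrable (fun ω => Real.exp (κ * ‖Z 0 ω‖)) μ)
    (B : ℕ → Finset ℕ) (hB : ∀ n, B n ⊆ Finset.range n)
    (a b : ℕ → ℕ → (Fin m → Fin d → ℝ)) (Mb : ℝ)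
    (hbound : ∀ n, ∀ i ∈ B n, ‖a n i‖ ≤ Mb ∧ ‖b n i‖ ≤ Mb)
    (κn : ℕ → ℝ) (hκnonneg : ∀ n, 0 ≤ κn n)
    (hκ : ∀ n, ∀ i ∈ B n, ‖a n i - b n i‖ ≤ κn n)
    (hκ0 : Tendsto κn atTop (nhds 0)) :
    ∀ ε > (0 : ℝ),
      Filter.limsup
        (fun n : ℕ => (((n : ℝ))⁻¹ : EReal) * ENNReal.log
          (μ {ω | ε < ‖(n : ℝ)⁻¹ • ∑ i ∈ B n,
              (Matrix.mulVec (a n i) (Z i ω) - Matrix.mulVec (b n i) (Z i ω))‖}))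
        atTop = ⊥ :=
  exponential_equivalence_general μ Z hmeas hindep hident hexp B hB a b κn hκ hκ0
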